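/- arXiv:1607.08563 — 2 statements merged into one kernel-verified Lean document; each statement's English description precedes it below -/
import Mathlib

section
/- Let ε ∈ (ℂ∖iℝ)ⁿ and α ∈ ℂⁿ with ε − α ∈ (ℂ∖iℝ)ⁿ, let τ be in the upper half-plane, u ∈ ℂⁿ, and set u' := u − iA⁻¹ατ. Then h_{ε−α}(u', τ) = e^{(πi/τ)(u,Au)} (2i)^{−n} √((−iτ)ⁿ/det A) · ∫_{ℝⁿ+iα} q^{(w,A⁻¹w)/2} e^{−2πi(u,w)} / ∏ⱼ₌₁ⁿ sin(π(wⱼ − iεⱼ)) dⁿw, where ∫_{ℝⁿ+iα} f dⁿw denotes ∫_{ℝⁿ} f(w + iα) dⁿw. -/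
open Complex MeasureTheory

noncomputable section

/-- Standard ℂ-bilinear form on ℂⁿ. -/
def bil {n : ℕ} (x y : Fin n → ℂ) : ℂ := ∑ i, x i * y i

/-- The function h_ε(u,τ). -/
def hfun {n : ℕ} (A : Matrix (Fin n) (Fin n) ℝ) (ε u : Fin n → ℂ) (τ : ℂ) : ℂ :=
  Complex.exp ((Real.pi : ℂ) * Complex.I / τ * bil u ((A.map Complex.ofReal).mulVec u)) *
  ((2 * Complex.I) ^ n)⁻¹ *
  (((-Complex.I * τ) ^ n / (A.det : ℂ)) ^ ((1 : ℂ) / 2)) *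
  ∫ w : Fin n → ℝ,
    Complex.exp (2 * (Real.pi : ℂ) * Complex.I * τ *
        (bil (fun i => (w i : ℂ)) ((A⁻¹.map Complex.ofReal).mulVec (fun i => (w i : ℂ))) / 2)) *
    Complex.exp (-2 * (Real.pi : ℂ) * Complex.I * bil u (fun i => (w i : ℂ))) /
    ∏ j, Complex.sin ((Real.pi : ℂ) * ((w j : ℂ) - Complex.I * ε j))

/-! After the substitution `u' = u - iτA⁻¹α`, completing the square shows that the total phase
`(πi/τ)(u',Au') + πiτ(w,A⁻¹w) - 2πi(u',w)` equals the phase obtained from `u` at the shifted point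
`w + iα`, while `(w + iα) - iε = w - i(ε - α)` matches the sine factors. So the two integrands,
multiplied by their exponential prefactors, agree pointwise on `ℝⁿ`. -/

namespace Matrix

variable {ι : Type*} [Fintype ι]

theorem IsSymm.dotProduct_mulVec_comm {R : Type*} [CommSemiring R] {M : Matrix ι ι R}
    (hM : M.IsSymm) (x y : ι → R) : x ⬝ᵥ M *ᵥ y = y ⬝ᵥ M *ᵥ x := by
  rw [← dotProduct_transpose_mulVec, hM.eq]

theorem IsSymm.dotProduct_mulVec_add_smul {R : Type*} [CommRing R] {M : Matrix ι ι R}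
    (hM : M.IsSymm) (x y : ι → R) (c : R) :
    (x + c • y) ⬝ᵥ M *ᵥ (x + c • y)
      = x ⬝ᵥ M *ᵥ x + 2 * c * (x ⬝ᵥ M *ᵥ y) + c ^ 2 * (y ⬝ᵥ M *ᵥ y) := by
  simp only [mulVec_add, mulVec_smul, add_dotProduct, dotProduct_add, smul_dotProduct,
    dotProduct_smul, smul_eq_mul, hM.dotProduct_mulVec_comm y x]
  ring

theorem map_nonsing_inv {R S : Type*} [DecidableEq ι] [CommRing R] [CommRing S] (f : R →+* S)
    {A : Matrix ι ι R} (hA : IsUnit A.det) : A⁻¹.map f = (A.map f)⁻¹ := by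
  refine (inv_eq_right_inv ?_).symm
  rw [← Matrix.map_mul, mul_nonsing_inv _ hA, Matrix.map_one _ f.map_zero f.map_one]

end Matrix

open Matrix
open scoped Real

theorem gaussian_phase_shift {ι : Type*} [Fintype ι] [DecidableEq ι] {M : Matrix ι ι ℂ}
    (hM : M.IsSymm) (hdet : IsUnit M.det) (u w α : ι → ℂ) {τ : ℂ} (hτ : τ ≠ 0) :
    π * I / τ * ((u - (I * τ) • M⁻¹ *ᵥ α) ⬝ᵥ M *ᵥ (u - (I * τ) • M⁻¹ *ᵥ α))
        + 2 * π * I * τ * (w ⬝ᵥ M⁻¹ *ᵥ w / 2) + -2 * π * I * ((u - (I * τ) • M⁻¹ *ᵥ α) ⬝ᵥ w)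
      = π * I / τ * (u ⬝ᵥ M *ᵥ u) + 2 * π * I * τ * ((w + I • α) ⬝ᵥ M⁻¹ *ᵥ (w + I • α) / 2)
        + -2 * π * I * (u ⬝ᵥ (w + I • α)) := by
  have hMM : M *ᵥ M⁻¹ *ᵥ α = α := by rw [mulVec_mulVec, mul_nonsing_inv _ hdet, one_mulVec]
  rw [sub_eq_add_neg, ← neg_smul, hM.dotProduct_mulVec_add_smul,
    hM.inv.dotProduct_mulVec_add_smul, hMM]
  simp only [add_dotProduct, dotProduct_add, smul_dotProduct, dotProduct_smul, smul_eq_mul,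
    dotProduct_comm (M⁻¹ *ᵥ α)]
  field_simp
  ring

theorem phase_mul_integrand_shift {ι : Type*} [Fintype ι] [DecidableEq ι] {M : Matrix ι ι ℂ}
    (hM : M.IsSymm) (hdet : IsUnit M.det) (ε α u w : ι → ℂ) {τ : ℂ} (hτ : τ ≠ 0) :
    exp (π * I / τ * ((u - (I * τ) • M⁻¹ *ᵥ α) ⬝ᵥ M *ᵥ (u - (I * τ) • M⁻¹ *ᵥ α))) *
        (exp (2 * π * I * τ * (w ⬝ᵥ M⁻¹ *ᵥ w / 2)) *
          exp (-2 * π * I * ((u - (I * τ) • M⁻¹ *ᵥ α) ⬝ᵥ w)) /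
          ∏ j, sin (π * (w j - I * (ε - α) j)))
      = exp (π * I / τ * (u ⬝ᵥ M *ᵥ u)) *
        (exp (2 * π * I * τ * ((w + I • α) ⬝ᵥ M⁻¹ *ᵥ (w + I • α) / 2)) *
          exp (-2 * π * I * (u ⬝ᵥ (w + I • α))) /
          ∏ j, sin (π * ((w + I • α) j - I * ε j))) := by
  have hsin : ∏ j, sin (π * (w j - I * (ε - α) j)) = ∏ j, sin (π * ((w + I • α) j - I * ε j)) :=
    Finset.prod_congr rfl fun j _ => by
      simp only [Pi.sub_apply, Pi.add_apply, Pi.smul_apply, smul_eq_mul]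
      congr 2
      ring
  have hexp := congrArg exp (gaussian_phase_shift hM hdet u w α hτ)
  simp only [Complex.exp_add] at hexp
  rw [hsin]
  linear_combination hexp / ∏ j, sin (π * ((w + I • α) j - I * ε j))

theorem mul_mul_mul_integral_congr {X 𝕜 : Type*} [MeasurableSpace X] {μ : Measure X} [RCLike 𝕜]
    {a b c d : 𝕜} {f g : X → 𝕜} (h : ∀ x, a * f x = b * g x) :
    a * c * d * ∫ x, f x ∂μ = b * c * d * ∫ x, g x ∂μ := by
  have hint : a * ∫ x, f x ∂μ = b * ∫ x, g x ∂μ := by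
    simp only [← integral_const_mul, h]
  linear_combination c * d * hint

theorem stmt3_general {n : ℕ} (A : Matrix (Fin n) (Fin n) ℝ)
    (hAsymm : A.IsSymm) (hApd : A.PosDef)
    (ε α u : Fin n → ℂ)
    (τ : ℂ) (hτ : 0 < τ.im) :
    hfun A (ε - α) (fun i => u i - Complex.I * τ * (A⁻¹.map Complex.ofReal).mulVec α i) τ
      = Complex.exp ((Real.pi : ℂ) * Complex.I / τ * bil u ((A.map Complex.ofReal).mulVec u)) *
        ((2 * Complex.I) ^ n)⁻¹ *
        (((-Complex.I * τ) ^ n / (A.det : ℂ)) ^ ((1 : ℂ) / 2)) *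
        ∫ w : Fin n → ℝ,
          Complex.exp (2 * (Real.pi : ℂ) * Complex.I * τ *
              (bil (fun i => (w i : ℂ) + Complex.I * α i)
                ((A⁻¹.map Complex.ofReal).mulVec (fun i => (w i : ℂ) + Complex.I * α i)) / 2)) *
          Complex.exp (-2 * (Real.pi : ℂ) * Complex.I *
              bil u (fun i => (w i : ℂ) + Complex.I * α i)) /
          ∏ j, Complex.sin ((Real.pi : ℂ) * (((w j : ℂ) + Complex.I * α j) - Complex.I * ε j)) := by
  have hτ0 : τ ≠ 0 := fun h => by simp [h] at hτ
  have hdet : IsUnit A.det := hApd.det_pos.ne'.isUnit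
  have hdetℂ : IsUnit (A.map ofReal).det := (RingHom.map_det ofRealHom A) ▸ hdet.map ofRealHom
  have hinv : A⁻¹.map ofReal = (A.map ofReal)⁻¹ := Matrix.map_nonsing_inv ofRealHom hdet
  rw [hfun, hinv]
  exact mul_mul_mul_integral_congr fun w =>
    phase_mul_integrand_shift (hAsymm.map _) hdetℂ ε α u (fun i => (w i : ℂ)) hτ0

theorem stmt3 {n : ℕ} (hn : 1 ≤ n) (A : Matrix (Fin n) (Fin n) ℝ)
    (hAsymm : A.IsSymm) (hApd : A.PosDef)
    (hAint : ∀ i j, ∃ m : ℤ, A i j = (m : ℝ))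
    (ε α u : Fin n → ℂ)
    (hε : ∀ j, (ε j).re ≠ 0) (hεα : ∀ j, (ε j - α j).re ≠ 0)
    (τ : ℂ) (hτ : 0 < τ.im) :
    hfun A (ε - α) (fun i => u i - Complex.I * τ * (A⁻¹.map Complex.ofReal).mulVec α i) τ
      = Complex.exp ((Real.pi : ℂ) * Complex.I / τ * bil u ((A.map Complex.ofReal).mulVec u)) *
        ((2 * Complex.I) ^ n)⁻¹ *
        (((-Complex.I * τ) ^ n / (A.det : ℂ)) ^ ((1 : ℂ) / 2)) *
        ∫ w : Fin n → ℝ,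
          Complex.exp (2 * (Real.pi : ℂ) * Complex.I * τ *
              (bil (fun i => (w i : ℂ) + Complex.I * α i)
                ((A⁻¹.map Complex.ofReal).mulVec (fun i => (w i : ℂ) + Complex.I * α i)) / 2)) *
          Complex.exp (-2 * (Real.pi : ℂ) * Complex.I *
              bil u (fun i => (w i : ℂ) + Complex.I * α i)) /
          ∏ j, Complex.sin ((Real.pi : ℂ) * (((w j : ℂ) + Complex.I * α j) - Complex.I * ε j)) :=
  stmt3_general A hAsymm hApd ε α u τ hτ
end
end

section
/- Let ε ∈ (ℂ∖iℝ)ⁿ, let α ∈ (iℝ)ⁿ be purely imaginary in each coordinate, let τ be in the upper half-plane and u ∈ ℂⁿ. Then h_{ε−α}(u − iA⁻¹ατ, τ) = h_ε(u, τ); that is, shifting the plane of integration ℝⁿ to ℝⁿ + iα does not change the value of the integral. -/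
open Complex MeasureTheory

noncomputable section

theorem stmt4 {n : ℕ} (hn : 1 ≤ n) (A : Matrix (Fin n) (Fin n) ℝ)
    (hAsymm : A.IsSymm) (hApd : A.PosDef)
    (hAint : ∀ i j, ∃ m : ℤ, A i j = (m : ℝ))
    (ε α u : Fin n → ℂ)
    (hε : ∀ j, (ε j).re ≠ 0) (hα : ∀ j, (α j).re = 0)
    (τ : ℂ) (hτ : 0 < τ.im) :
    hfun A (ε - α) (fun i => u i - Complex.I * τ * (A⁻¹.map Complex.ofReal).mulVec α i) τ
      = hfun A ε u τ := by
  classical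
  have hτ0 : τ ≠ 0 := by
    intro h; rw [h] at hτ; simp at hτ
  have hbil : ∀ x y : Fin n → ℂ, bil x y = dotProduct x y := fun _ _ => rfl
  set Am : Matrix (Fin n) (Fin n) ℂ := A.map Complex.ofReal with hAmdef
  set B : Matrix (Fin n) (Fin n) ℂ := (A⁻¹).map Complex.ofReal with hBdef
  have hdet : IsUnit (A.det) := isUnit_iff_ne_zero.mpr hApd.det_pos.ne'
  have hAB : Am * B = 1 := by
    rw [hAmdef, hBdef]
    have : (A * A⁻¹).map (Complex.ofRealHom : ℝ →+* ℂ) =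
        A.map (Complex.ofRealHom : ℝ →+* ℂ) * (A⁻¹).map (Complex.ofRealHom : ℝ →+* ℂ) :=
      Matrix.map_mul
    rw [show (Complex.ofReal : ℝ → ℂ) = ⇑(Complex.ofRealHom : ℝ →+* ℂ) from rfl, ← this,
      Matrix.mul_nonsing_inv A hdet]
    exact Matrix.map_one _ (map_zero _) (map_one _)
  have hAmsymm : Am.transpose = Am := by
    rw [hAmdef, ← Matrix.transpose_map, hAsymm.eq]
  have hBsymm : B.transpose = B := by
    rw [hBdef, ← Matrix.transpose_map, Matrix.transpose_nonsing_inv, hAsymm.eq]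
  -- symmetry of the bilinear form for a symmetric matrix
  have hsym : ∀ (M : Matrix (Fin n) (Fin n) ℂ), M.transpose = M → ∀ x y : Fin n → ℂ,
      bil x (M.mulVec y) = bil y (M.mulVec x) := by
    intro M hM x y
    simp only [hbil, dotProduct, Matrix.mulVec, Finset.mul_sum]
    rw [Finset.sum_comm]
    refine Finset.sum_congr rfl fun j _ => Finset.sum_congr rfl fun i _ => ?_
    have hMij : M j i = M i j := congrFun (congrFun hM i) j
    rw [hMij]; ring
  -- the real translation vector
  set t : Fin n → ℝ := fun j => (α j).im with htdef
  set tc : Fin n → ℂ := fun j => ((t j : ℝ) : ℂ) with htcdef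
  have hαt : ∀ j, α j = Complex.I * tc j := by
    intro j
    apply Complex.ext <;> simp [htcdef, htdef, hα j]
  have hαtc : α = Complex.I • tc := by
    funext j; simpa [Pi.smul_apply, smul_eq_mul] using hαt j
  set s : Fin n → ℂ := B.mulVec tc with hsdef
  have hAs : Am.mulVec s = tc := by
    rw [hsdef, Matrix.mulVec_mulVec, hAB, Matrix.one_mulVec]
  -- the shifted u equals u + τ • s
  have hu' : (fun i => u i - Complex.I * τ * B.mulVec α i) = u + τ • s := by
    funext i
    have : B.mulVec α = Complex.I • s := by rw [hαtc, Matrix.mulVec_smul, hsdef]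
    rw [this]
    simp only [Pi.add_apply, Pi.smul_apply, smul_eq_mul]
    linear_combination (-(τ * s i)) * Complex.I_sq
  -- abbreviations for the scalar quantities
  set m : ℂ := bil tc s with hmdef
  set gu : ℂ := bil u tc with hgudef
  set c : ℂ := -((Real.pi : ℂ) * Complex.I * τ * m) - 2 * (Real.pi : ℂ) * Complex.I * gu with hcdef
  -- expansion of the quadratic prefactor
  have hP : bil (u + τ • s) (Am.mulVec (u + τ • s))
      = bil u (Am.mulVec u) + 2 * τ * gu + τ ^ 2 * m := by
    rw [Matrix.mulVec_add, Matrix.mulVec_smul, hAs]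
    simp only [hbil, dotProduct_add, add_dotProduct, dotProduct_smul,
      smul_dotProduct, smul_eq_mul]
    have h1 : dotProduct s (Am.mulVec u) = dotProduct u tc := by
      rw [← hbil, ← hbil, hsym Am hAmsymm s u, hAs]
    have h2 : dotProduct s tc = m := by
      rw [hmdef, hbil, dotProduct_comm]
    have h3 : dotProduct u tc = gu := rfl
    rw [h1, h2, h3]
    ring
  -- the pointwise identity for the integrand
  set FL : (Fin n → ℝ) → ℂ := fun w =>
    Complex.exp (2 * (Real.pi : ℂ) * Complex.I * τ *
        (bil (fun i => (w i : ℂ)) (B.mulVec (fun i => (w i : ℂ))) / 2)) *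
    Complex.exp (-2 * (Real.pi : ℂ) * Complex.I * bil (u + τ • s) (fun i => (w i : ℂ))) /
    ∏ j, Complex.sin ((Real.pi : ℂ) * ((w j : ℂ) - Complex.I * (ε - α) j)) with hFLdef
  set FR : (Fin n → ℝ) → ℂ := fun w =>
    Complex.exp (2 * (Real.pi : ℂ) * Complex.I * τ *
        (bil (fun i => (w i : ℂ)) (B.mulVec (fun i => (w i : ℂ))) / 2)) *
    Complex.exp (-2 * (Real.pi : ℂ) * Complex.I * bil u (fun i => (w i : ℂ))) /
    ∏ j, Complex.sin ((Real.pi : ℂ) * ((w j : ℂ) - Complex.I * ε j)) with hFRdef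
  have hkey : ∀ v : Fin n → ℝ, FL (v + t) = Complex.exp c * FR v := by
    intro v
    have hvt : (fun i => (((v + t) i : ℝ) : ℂ)) = (fun i => ((v i : ℝ) : ℂ)) + tc := by
      funext i; simp [htcdef, Pi.add_apply]
    set vc : Fin n → ℂ := fun i => ((v i : ℝ) : ℂ) with hvcdef
    have hden : ∀ j, (((v + t) j : ℝ) : ℂ) - Complex.I * (ε - α) j
        = ((v j : ℝ) : ℂ) - Complex.I * ε j := by
      intro j
      have := hαt j
      simp only [Pi.add_apply, Pi.sub_apply, Complex.ofReal_add, this]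
      linear_combination (tc j) * Complex.I_sq
    have hQ : bil (vc + tc) (B.mulVec (vc + tc))
        = bil vc (B.mulVec vc) + 2 * bil vc s + m := by
      rw [Matrix.mulVec_add, ← hsdef]
      simp only [hbil, dotProduct_add, add_dotProduct]
      have h1 : dotProduct tc (B.mulVec vc) = dotProduct vc s := by
        rw [← hbil, ← hbil, hsym B hBsymm tc vc, hsdef]
      have h2 : dotProduct tc s = m := rfl
      rw [h1, h2]
      ring
    have hL : bil (u + τ • s) (vc + tc)
        = bil u vc + τ * bil vc s + gu + τ * m := by
      simp only [hbil, dotProduct_add, add_dotProduct, smul_dotProduct,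
        smul_eq_mul]
      have h1 : dotProduct s vc = dotProduct vc s := dotProduct_comm _ _
      have h2 : dotProduct s tc = m := by rw [hmdef, hbil, dotProduct_comm]
      have h5 : dotProduct u tc = gu := rfl
      rw [h1, h2, h5]
      ring
    rw [hFLdef, hFRdef]
    simp only
    rw [hvt, show (fun i => ((v i : ℝ) : ℂ)) = vc from rfl]
    have hdenprod : (∏ j, Complex.sin ((Real.pi : ℂ) * (((((v + t) j : ℝ)) : ℂ) - Complex.I * (ε - α) j)))
        = ∏ j, Complex.sin ((Real.pi : ℂ) * (((v j : ℝ) : ℂ) - Complex.I * ε j)) := by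
      refine Finset.prod_congr rfl fun j _ => ?_
      rw [hden j]
    rw [hdenprod, hQ, hL]
    have hnum : Complex.exp (2 * (Real.pi : ℂ) * Complex.I * τ *
          ((bil vc (B.mulVec vc) + 2 * bil vc s + m) / 2)) *
        Complex.exp (-2 * (Real.pi : ℂ) * Complex.I *
          (bil u vc + τ * bil vc s + gu + τ * m))
        = Complex.exp c *
          (Complex.exp (2 * (Real.pi : ℂ) * Complex.I * τ * (bil vc (B.mulVec vc) / 2)) *
           Complex.exp (-2 * (Real.pi : ℂ) * Complex.I * bil u vc)) := by
      rw [← Complex.exp_add, ← Complex.exp_add, ← Complex.exp_add, hcdef]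
      congr 1
      ring
    rw [hnum, mul_div_assoc]

  -- unfold hfun and rewrite
  unfold hfun
  rw [hu']
  have hIL : (∫ w : Fin n → ℝ, FL w) = Complex.exp c * ∫ w, FR w := by
    rw [← MeasureTheory.integral_add_right_eq_self FL t]
    simp only [hkey]
    exact MeasureTheory.integral_const_mul _ _
  have hexp : Complex.exp ((Real.pi : ℂ) * Complex.I / τ *
        (bil u (Am.mulVec u) + 2 * τ * gu + τ ^ 2 * m)) * Complex.exp c
      = Complex.exp ((Real.pi : ℂ) * Complex.I / τ * bil u (Am.mulVec u)) := by
    rw [← Complex.exp_add]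
    congr 1
    rw [hcdef]
    field_simp
    ring
  rw [show (∫ w : Fin n → ℝ,
      Complex.exp (2 * (Real.pi : ℂ) * Complex.I * τ *
        (bil (fun i => (w i : ℂ)) (B.mulVec (fun i => (w i : ℂ))) / 2)) *
      Complex.exp (-2 * (Real.pi : ℂ) * Complex.I * bil (u + τ • s) (fun i => (w i : ℂ))) /
      ∏ j, Complex.sin ((Real.pi : ℂ) * ((w j : ℂ) - Complex.I * (ε - α) j)))
      = ∫ w, FL w from rfl]
  rw [show (∫ w : Fin n → ℝ,
      Complex.exp (2 * (Real.pi : ℂ) * Complex.I * τ *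
        (bil (fun i => (w i : ℂ)) (B.mulVec (fun i => (w i : ℂ))) / 2)) *
      Complex.exp (-2 * (Real.pi : ℂ) * Complex.I * bil u (fun i => (w i : ℂ))) /
      ∏ j, Complex.sin ((Real.pi : ℂ) * ((w j : ℂ) - Complex.I * ε j)))
      = ∫ w, FR w from rfl]
  rw [hIL, hP, ← hexp]
  ring
end
end
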